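/- arXiv:1901.04344 — 2 statements merged into one kernel-verified Lean document; each statement's English description precedes it below -/
import Mathlib

section
/- Let A ∈ Matrix (Fin 2) (Fin 2) ℂ with trace A = 0 and det A ≠ 0, and let M ∈ Matrix (Fin 2) (Fin 2) ℂ with trace M = 1, det M = 0, and M·A = A·M. Then there exists s ∈ ℂ with s² = −det A and M = (1/2) • (1 : Matrix (Fin 2) (Fin 2) ℂ) + (1/(2s)) • A. -/
/-!
Both matrices satisfy the 2×2 Cayley–Hamilton identity: `A² = -det A • 1`, and `M² = M`, so that
`N = M - ½` is traceless with `N² = ¼`. Polarizing Cayley–Hamilton shows that two commuting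
traceless 2×2 matrices satisfy `2 N A = tr (N A) • 1`; multiplying by `A` gives `N = β • A`.
Then `β² (-det A) = ¼`, and `s = 1 / (2β)` is the required square root of `-det A`.
-/

namespace Matrix

variable {R : Type*} [CommRing R]

theorem fin_two_mul_self (A : Matrix (Fin 2) (Fin 2) R) :
    A * A = A.trace • A - A.det • 1 := by
  ext i j
  fin_cases i <;> fin_cases j <;> simp [mul_apply, trace_fin_two, det_fin_two] <;> ring

theorem fin_two_mul_add_mul (X Y : Matrix (Fin 2) (Fin 2) R) :
    X * Y + Y * X = X.trace • Y + Y.trace • X + ((X * Y).trace - X.trace * Y.trace) • 1 := by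
  ext i j
  fin_cases i <;> fin_cases j <;> simp [mul_apply, trace_fin_two] <;> ring

theorem fin_two_mul_self_of_trace_eq_zero {A : Matrix (Fin 2) (Fin 2) R} (hA : A.trace = 0) :
    A * A = (-A.det) • 1 := by
  simpa [hA, neg_smul, sub_eq_add_neg] using fin_two_mul_self A

theorem fin_two_mul_self_of_trace_eq_one_of_det_eq_zero {M : Matrix (Fin 2) (Fin 2) R}
    (hM : M.trace = 1) (hMdet : M.det = 0) : M * M = M := by
  simpa [hM, hMdet] using fin_two_mul_self M

theorem two_smul_mul_of_commute_of_trace_eq_zero {X Y : Matrix (Fin 2) (Fin 2) R}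
    (hXY : Commute X Y) (hX : X.trace = 0) (hY : Y.trace = 0) :
    (2 : R) • (X * Y) = (X * Y).trace • 1 := by
  simpa [hX, hY, two_smul, ← hXY.eq] using fin_two_mul_add_mul X Y

theorem exists_eq_smul_of_commute_of_trace_eq_zero {K : Type*} [Field K] [NeZero (2 : K)]
    {X Y : Matrix (Fin 2) (Fin 2) K} (hXY : Commute X Y) (hX : X.trace = 0) (hY : Y.trace = 0)
    (hdet : Y.det ≠ 0) : ∃ β : K, X = β • Y := by
  have key : (2 * -Y.det) • X = (X * Y).trace • Y :=
    calc (2 * -Y.det) • X = (2 : K) • (X * (Y * Y)) := by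
          rw [fin_two_mul_self_of_trace_eq_zero hY, mul_smul, mul_smul_comm, mul_one]
      _ = (2 : K) • (X * Y) * Y := by rw [smul_mul_assoc, Matrix.mul_assoc]
      _ = (X * Y).trace • Y := by
          rw [two_smul_mul_of_commute_of_trace_eq_zero hXY hX hY, smul_mul_assoc, one_mul]
  refine ⟨(X * Y).trace / (2 * -Y.det), ?_⟩
  rw [div_eq_inv_mul, mul_smul, ← key, smul_smul,
    inv_mul_cancel₀ (mul_ne_zero two_ne_zero (neg_ne_zero.mpr hdet)), one_smul]

end Matrix

/-- A trace-one, determinant-zero 2×2 matrix commuting with a traceless invertible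
matrix `A` is `½ I + A/(2s)` with `s² = −det A`. -/
theorem M0_explicit_form
    (A M : Matrix (Fin 2) (Fin 2) ℂ)
    (hA : A.trace = 0) (hdet : A.det ≠ 0)
    (hM : M.trace = 1) (hMdet : M.det = 0)
    (hcomm : M * A = A * M) :
    ∃ s : ℂ, s ^ 2 = -A.det ∧
      M = (1/2 : ℂ) • (1 : Matrix (Fin 2) (Fin 2) ℂ) + (1/(2*s)) • A := by
  set N := M - (1/2 : ℂ) • 1 with hN
  have hNtr : N.trace = 0 := by simp [hN, hM]
  have hNA : Commute N A := Commute.sub_left hcomm ((Commute.one_left A).smul_left _)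
  obtain ⟨β, hβ⟩ := Matrix.exists_eq_smul_of_commute_of_trace_eq_zero hNA hNtr hA hdet
  have hN2 : N * N = (1/4 : ℂ) • 1 := by
    have hMM := Matrix.fin_two_mul_self_of_trace_eq_one_of_det_eq_zero hM hMdet
    simp only [hN, sub_mul, mul_sub, hMM, smul_mul_assoc, mul_smul_comm, one_mul, mul_one]
    module
  have hβ2 : β ^ 2 * -A.det = 1/4 := by
    rw [hβ, smul_mul_smul, Matrix.fin_two_mul_self_of_trace_eq_zero hA, smul_smul] at hN2
    simpa [sq] using congrFun (congrFun hN2 0) 0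
  have hβ0 : β ≠ 0 := by rintro rfl; norm_num at hβ2
  refine ⟨1 / (2 * β), ?_, ?_⟩
  · field_simp
    linear_combination -4 * hβ2
  · have hinv : 1 / (2 * (1 / (2 * β))) = β := by field_simp
    rw [hinv, ← hβ, hN, add_sub_cancel]
end

section
/- Let a, b ∈ ℂ with a ≠ b, and let z₁, z₂ ∈ ℂ with z₁ ∉ {0, 1, −1}, z₂ ∉ {0, 1, −1}, z₁ ≠ z₂, and z₁·z₂ ≠ 1. Define x(z) := (a+b)/2 + ((b−a)/4)·(z + z⁻¹), x'(z) := ((b−a)/4)·(1 − z⁻²), s(z) := ((b−a)/4)·(z − z⁻¹), and T := 1/2 − (−2·x(z₁)·x(z₂) + (a+b)·(x(z₁) + x(z₂)) − 2·a·b)/(4·s(z₁)·s(z₂)). Then T·x'(z₁)·x'(z₂)/(x(z₁) − x(z₂))² = 1/(z₁ − z₂)². -/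
set_option maxHeartbeats 2000000 in
/-- Identification of the two-point function with the Bergman kernel
(two branchpoints case). -/
theorem bergman_two_branchpoints
    (a b : ℂ) (hab : a ≠ b)
    (z₁ z₂ : ℂ)
    (h₁ : z₁ ∉ ({0, 1, -1} : Set ℂ)) (h₂ : z₂ ∉ ({0, 1, -1} : Set ℂ))
    (hz : z₁ ≠ z₂) (hprod : z₁ * z₂ ≠ 1)
    (x x' s : ℂ → ℂ)
    (hx : ∀ z, x z = (a + b)/2 + ((b - a)/4) * (z + z⁻¹))
    (hx' : ∀ z, x' z = ((b - a)/4) * (1 - (z ^ 2)⁻¹))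
    (hs : ∀ z, s z = ((b - a)/4) * (z - z⁻¹))
    (T : ℂ)
    (hT : T = 1/2 - (-2 * x z₁ * x z₂ + (a + b) * (x z₁ + x z₂) - 2 * a * b)
        / (4 * s z₁ * s z₂)) :
    T * x' z₁ * x' z₂ / (x z₁ - x z₂) ^ 2 = 1 / (z₁ - z₂) ^ 2 := by
  simp only [Set.mem_insert_iff, Set.mem_singleton_iff, not_or] at h₁ h₂
  obtain ⟨h10, h11, h1m⟩ := h₁
  obtain ⟨h20, h21, h2m⟩ := h₂
  have hba : b - a ≠ 0 := sub_ne_zero.mpr (Ne.symm hab)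
  have hzz : z₁ - z₂ ≠ 0 := sub_ne_zero.mpr hz
  have hp : z₁ * z₂ - 1 ≠ 0 := sub_ne_zero.mpr hprod
  have hp0 : z₁ * z₂ ≠ 0 := mul_ne_zero h10 h20
  have hs1 : z₁ ^ 2 - 1 ≠ 0 := by
    intro h
    rcases mul_eq_zero.mp (by linear_combination h : (z₁ - 1) * (z₁ + 1) = 0) with h | h
    · exact h11 (by linear_combination h)
    · exact h1m (by linear_combination h)
  have hs2 : z₂ ^ 2 - 1 ≠ 0 := by
    intro h
    rcases mul_eq_zero.mp (by linear_combination h : (z₂ - 1) * (z₂ + 1) = 0) with h | h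
    · exact h21 (by linear_combination h)
    · exact h2m (by linear_combination h)
  have hX1 : x z₁ = ((a + b) * (2 * z₁) + (b - a) * (z₁ ^ 2 + 1)) / (4 * z₁) := by
    rw [hx, eq_div_iff (by simp [h10] : (4:ℂ) * z₁ ≠ 0)]
    field_simp
    ring
  have hX2 : x z₂ = ((a + b) * (2 * z₂) + (b - a) * (z₂ ^ 2 + 1)) / (4 * z₂) := by
    rw [hx, eq_div_iff (by simp [h20] : (4:ℂ) * z₂ ≠ 0)]
    field_simp
    ring
  have hS1 : s z₁ = (b - a) * (z₁ ^ 2 - 1) / (4 * z₁) := by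
    rw [hs, eq_div_iff (by simp [h10] : (4:ℂ) * z₁ ≠ 0)]
    field_simp
  have hS2 : s z₂ = (b - a) * (z₂ ^ 2 - 1) / (4 * z₂) := by
    rw [hs, eq_div_iff (by simp [h20] : (4:ℂ) * z₂ ≠ 0)]
    field_simp
  have hX'1 : x' z₁ = (b - a) * (z₁ ^ 2 - 1) / (4 * z₁ ^ 2) := by
    rw [hx', eq_div_iff (by simp [h10] : (4:ℂ) * z₁ ^ 2 ≠ 0)]
    field_simp
  have hX'2 : x' z₂ = (b - a) * (z₂ ^ 2 - 1) / (4 * z₂ ^ 2) := by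
    rw [hx', eq_div_iff (by simp [h20] : (4:ℂ) * z₂ ^ 2 ≠ 0)]
    field_simp
  have hXdiff : x z₁ - x z₂ = (b - a) * ((z₁ - z₂) * (z₁ * z₂ - 1)) / (4 * (z₁ * z₂)) := by
    rw [hX1, hX2, div_sub_div _ _ (by simp [h10] : (4:ℂ) * z₁ ≠ 0) (by simp [h20] : (4:ℂ) * z₂ ≠ 0),
      div_eq_div_iff (by simp [h10, h20] : ((4:ℂ) * z₁) * (4 * z₂) ≠ 0)
        (by simp [hp0] : (4:ℂ) * (z₁ * z₂) ≠ 0)]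
    ring
  have hN : -2 * x z₁ * x z₂ + (a + b) * (x z₁ + x z₂) - 2 * a * b
      = (b - a) ^ 2 * (4 * (z₁ * z₂) - (z₁ ^ 2 + 1) * (z₂ ^ 2 + 1)) / (8 * (z₁ * z₂)) := by
    rw [hX1, hX2, eq_div_iff (by simp [hp0] : (8:ℂ) * (z₁ * z₂) ≠ 0)]
    field_simp
    ring
  have hD : 4 * s z₁ * s z₂
      = (b - a) ^ 2 * ((z₁ ^ 2 - 1) * (z₂ ^ 2 - 1)) / (4 * (z₁ * z₂)) := by
    rw [hS1, hS2, eq_div_iff (by simp [hp0] : (4:ℂ) * (z₁ * z₂) ≠ 0)]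
    field_simp
  have hBne : (b - a) ^ 2 * ((z₁ ^ 2 - 1) * (z₂ ^ 2 - 1)) ≠ 0 :=
    mul_ne_zero (pow_ne_zero 2 hba) (mul_ne_zero hs1 hs2)
  have hTeq : T = (z₁ * z₂ - 1) ^ 2 / ((z₁ ^ 2 - 1) * (z₂ ^ 2 - 1)) := by
    rw [hT, hN, hD, div_div_div_comm,
      eq_div_iff (mul_ne_zero hs1 hs2)]
    rw [div_div_div_comm]
    field_simp
    ring
  have hBig : ((b - a) * ((z₁ - z₂) * (z₁ * z₂ - 1))) ^ 2 / (4 * (z₁ * z₂)) ^ 2 ≠ 0 :=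
    div_ne_zero (pow_ne_zero 2 (mul_ne_zero hba (mul_ne_zero hzz hp)))
      (pow_ne_zero 2 (by simp [hp0]))
  rw [hTeq, hX'1, hX'2, hXdiff, div_pow, div_mul_div_comm, div_mul_div_comm,
    div_eq_div_iff hBig (pow_ne_zero 2 hzz)]
  rw [one_mul, div_mul_eq_mul_div,
    div_eq_div_iff
      (by exact mul_ne_zero (mul_ne_zero (mul_ne_zero hs1 hs2) (by simp [h10])) (by simp [h20]))
      (by exact pow_ne_zero 2 (by simp [hp0]))]
  ring
end
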